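/- Let y = A·x_S + e where x_S ∈ ℝⁿ is K-sparse with support S, and A satisfies the RIP of order 3K with constant δ_{3K} and of order 4K with constant δ_{4K} < 1. Let U be an index set with |U| ≤ 3K and let u be the least-squares solution on U. Then ‖(u − x_S)_U‖ ≤ ( δ_{4K}/√(1−δ_{4K}²) )·‖(x_S)_{\overline{U}}‖ + τ₁·‖e‖, where τ₁ := √(1+δ_{3K})/(1−δ_{4K}). -/

import Mathlib

open Finset

/-- Euclidean norm of a vector. -/
noncomputable def euclNorm {d : ℕ} (x : Fin d → ℝ) : ℝ := Real.sqrt (∑ i, x i ^ 2)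

/-- The support of a vector, as a finite set of indices. -/
noncomputable def supp {d : ℕ} (x : Fin d → ℝ) : Finset (Fin d) :=
  Finset.univ.filter (fun i => x i ≠ 0)

/-- `restrict x T` agrees with `x` on `T` and is zero outside `T`. -/
def restrict {d : ℕ} (x : Fin d → ℝ) (T : Finset (Fin d)) : Fin d → ℝ :=
  fun i => if i ∈ T then x i else 0

/-- `A` satisfies the Restricted Isometry Property of order `L` with constant `δ ∈ (0,1)`. -/
def RIP {m d : ℕ} (A : Matrix (Fin m) (Fin d) ℝ) (L : ℕ) (δ : ℝ) : Prop :=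
  0 < δ ∧ δ < 1 ∧
  ∀ x : Fin d → ℝ, (supp x).card ≤ L →
    (1 - δ) * euclNorm x ^ 2 ≤ euclNorm (A.mulVec x) ^ 2 ∧
    euclNorm (A.mulVec x) ^ 2 ≤ (1 + δ) * euclNorm x ^ 2

/-- `u` is the least-squares solution on the index set `U`: it is supported on `U` and
`y - A u` is orthogonal to `A z` whenever `z` is supported on `U`. -/
def LeastSq {m d : ℕ} (A : Matrix (Fin m) (Fin d) ℝ) (y : Fin m → ℝ)
    (U : Finset (Fin d)) (u : Fin d → ℝ) : Prop :=
  supp u ⊆ U ∧ ∀ z : Fin d → ℝ, supp z ⊆ U →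
    ∑ i, (y i - A.mulVec u i) * A.mulVec z i = 0

/-
Write `h = u - x_S` and `w = h_U`. Since `u` vanishes off `U`, `⟨h, w⟩ = ‖w‖²` and
`‖h‖² = ‖w‖² + r²` with `r = ‖(x_S)_Ū‖`, while the least-squares condition gives
`⟨Ah, Aw⟩ = ⟨e, Aw⟩`. Both `h` and `w` are supported on `U ∪ S`, of size at most `4K`, so by
polarization the RIP says that `A` almost preserves their inner product; together with
`‖Aw‖ ≤ √(1 + δ₃) ‖w‖` this gives `‖w‖² ≤ (δ₄ ‖h‖ + E) ‖w‖` with `E = √(1 + δ₃) ‖e‖`.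
Hence `a = ‖w‖` satisfies `a ≤ δ₄ √(a² + r²) + E`, and solving this quadratic inequality
for `a` gives the bound.
-/

open Matrix

section EuclNorm

variable {d : ℕ}

lemma euclNorm_eq_sqrt_dotProduct (x : Fin d → ℝ) : euclNorm x = √(x ⬝ᵥ x) := by
  simp only [euclNorm, dotProduct, sq]

lemma euclNorm_nonneg (x : Fin d → ℝ) : 0 ≤ euclNorm x := Real.sqrt_nonneg _

lemma euclNorm_sq (x : Fin d → ℝ) : euclNorm x ^ 2 = x ⬝ᵥ x := by
  rw [euclNorm_eq_sqrt_dotProduct]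
  exact Real.sq_sqrt (Finset.sum_nonneg fun i _ => mul_self_nonneg (x i))

lemma eq_zero_of_euclNorm_eq_zero {x : Fin d → ℝ} (h : euclNorm x = 0) : x = 0 :=
  dotProduct_self_eq_zero.mp (by rw [← euclNorm_sq, h, sq, zero_mul])

lemma euclNorm_neg (x : Fin d → ℝ) : euclNorm (-x) = euclNorm x := by
  simp only [euclNorm_eq_sqrt_dotProduct, neg_dotProduct, dotProduct_neg, neg_neg]

lemma dotProduct_le_euclNorm_mul_euclNorm (x y : Fin d → ℝ) :
    x ⬝ᵥ y ≤ euclNorm x * euclNorm y :=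
  Real.sum_mul_le_sqrt_mul_sqrt _ _ _

end EuclNorm

section Support

variable {d : ℕ}

lemma mem_supp {x : Fin d → ℝ} {i : Fin d} : i ∈ supp x ↔ x i ≠ 0 := by
  simp [supp]

lemma supp_add_subset (a b : Fin d → ℝ) : supp (a + b) ⊆ supp a ∪ supp b := by
  intro i
  simp only [mem_supp, mem_union, Pi.add_apply]
  contrapose!
  rintro ⟨ha, hb⟩
  simp [ha, hb]

lemma supp_sub_subset (a b : Fin d → ℝ) : supp (a - b) ⊆ supp a ∪ supp b := by
  intro i
  simp only [mem_supp, mem_union, Pi.sub_apply]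
  contrapose!
  rintro ⟨ha, hb⟩
  simp [ha, hb]

lemma supp_smul_subset (c : ℝ) (a : Fin d → ℝ) : supp (c • a) ⊆ supp a := by
  intro i
  simp only [mem_supp, Pi.smul_apply, smul_eq_mul]
  exact right_ne_zero_of_mul

lemma supp_restrict_subset (x : Fin d → ℝ) (T : Finset (Fin d)) :
    supp (restrict x T) ⊆ T := by
  intro i hi
  by_contra hiT
  exact mem_supp.mp hi (by simp [_root_.restrict, hiT])

lemma dotProduct_restrict_self (x : Fin d → ℝ) (T : Finset (Fin d)) :
    x ⬝ᵥ restrict x T = euclNorm (restrict x T) ^ 2 := by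
  rw [euclNorm_sq]
  refine Finset.sum_congr rfl fun i _ => ?_
  by_cases hi : i ∈ T <;> simp [_root_.restrict, hi]

lemma euclNorm_sq_eq_restrict_add_restrict_compl (x : Fin d → ℝ) (T : Finset (Fin d)) :
    euclNorm x ^ 2 = euclNorm (restrict x T) ^ 2 + euclNorm (restrict x Tᶜ) ^ 2 := by
  simp only [euclNorm_sq, dotProduct, ← Finset.sum_add_distrib]
  refine Finset.sum_congr rfl fun i _ => ?_
  by_cases hi : i ∈ T <;> simp [_root_.restrict, hi]

lemma restrict_compl_sub_of_supp_subset {u : Fin d → ℝ} {T : Finset (Fin d)} (hu : supp u ⊆ T)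
    (x : Fin d → ℝ) : restrict (u - x) Tᶜ = -restrict x Tᶜ := by
  funext i
  by_cases hi : i ∈ T
  · simp [_root_.restrict, hi]
  · have : u i = 0 := by_contra fun h => hi (hu (mem_supp.mpr h))
    simp [_root_.restrict, hi, this]

end Support

namespace RIP

variable {m d L : ℕ} {A : Matrix (Fin m) (Fin d) ℝ} {δ : ℝ}

lemma abs_mulVec_dotProduct_self_sub_le (hA : RIP A L δ) {x : Fin d → ℝ}
    (hx : (supp x).card ≤ L) : |A *ᵥ x ⬝ᵥ A *ᵥ x - x ⬝ᵥ x| ≤ δ * (x ⬝ᵥ x) := by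
  have h := hA.2.2 x hx
  rw [euclNorm_sq, euclNorm_sq] at h
  exact abs_sub_le_iff.mpr ⟨by linarith [h.2], by linarith [h.1]⟩

lemma euclNorm_mulVec_le (hA : RIP A L δ) {x : Fin d → ℝ} (hx : (supp x).card ≤ L) :
    euclNorm (A *ᵥ x) ≤ √(1 + δ) * euclNorm x := by
  rw [← Real.sqrt_sq (euclNorm_nonneg (A *ᵥ x)), ← Real.sqrt_sq (euclNorm_nonneg x),
    ← Real.sqrt_mul' _ (sq_nonneg _)]
  exact Real.sqrt_le_sqrt (hA.2.2 x hx).2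

lemma abs_mulVec_dotProduct_sub_le_half (hA : RIP A L δ) {a b : Fin d → ℝ}
    (hab : (supp a ∪ supp b).card ≤ L) :
    |A *ᵥ a ⬝ᵥ A *ᵥ b - a ⬝ᵥ b| ≤ δ / 2 * (a ⬝ᵥ a + b ⬝ᵥ b) := by
  have hadd := hA.abs_mulVec_dotProduct_self_sub_le ((card_le_card (supp_add_subset a b)).trans hab)
  have hsub := hA.abs_mulVec_dotProduct_self_sub_le ((card_le_card (supp_sub_subset a b)).trans hab)
  simp only [mulVec_add, mulVec_sub, add_dotProduct, dotProduct_add,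
    sub_dotProduct, dotProduct_sub, dotProduct_comm b a, dotProduct_comm (A *ᵥ b) (A *ᵥ a)]
    at hadd hsub
  rw [abs_le] at hadd hsub ⊢
  constructor <;> linarith [hadd.1, hadd.2, hsub.1, hsub.2]

lemma abs_mulVec_dotProduct_sub_le (hA : RIP A L δ) {a b : Fin d → ℝ}
    (hab : (supp a ∪ supp b).card ≤ L) :
    |A *ᵥ a ⬝ᵥ A *ᵥ b - a ⬝ᵥ b| ≤ δ * euclNorm a * euclNorm b := by
  set P := euclNorm a * euclNorm b
  rcases (mul_nonneg (euclNorm_nonneg a) (euclNorm_nonneg b)).eq_or_lt with hP | hP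
  · rcases mul_eq_zero.mp hP.symm with ha | hb
    · obtain rfl := eq_zero_of_euclNorm_eq_zero ha
      simp [ha]
    · obtain rfl := eq_zero_of_euclNorm_eq_zero hb
      simp [hb]
  -- rescale `a` and `b` to the same norm `P`, where the half bound is sharp
  have h := hA.abs_mulVec_dotProduct_sub_le_half (a := euclNorm b • a) (b := euclNorm a • b)
    ((card_le_card (union_subset_union (supp_smul_subset _ a) (supp_smul_subset _ b))).trans hab)
  simp only [mulVec_smul, smul_dotProduct, dotProduct_smul, smul_eq_mul, ← euclNorm_sq,
    ← mul_sub, abs_mul, abs_of_nonneg (euclNorm_nonneg a), abs_of_nonneg (euclNorm_nonneg b)] at h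
  have : P * |A *ᵥ a ⬝ᵥ A *ᵥ b - a ⬝ᵥ b| ≤ P * (δ * P) :=
    calc _ = euclNorm a * (euclNorm b * |A *ᵥ a ⬝ᵥ A *ᵥ b - a ⬝ᵥ b|) := by ring
      _ ≤ _ := h
      _ = P * (δ * P) := by ring
  simpa [mul_assoc] using le_of_mul_le_mul_left this hP

end RIP

lemma LeastSq.mulVec_sub_dotProduct_eq {m d : ℕ} {A : Matrix (Fin m) (Fin d) ℝ}
    {x u : Fin d → ℝ} {e : Fin m → ℝ} {U : Finset (Fin d)} (hLS : LeastSq A (A *ᵥ x + e) U u)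
    {z : Fin d → ℝ} (hz : supp z ⊆ U) : A *ᵥ (u - x) ⬝ᵥ A *ᵥ z = e ⬝ᵥ A *ᵥ z := by
  have h : (A *ᵥ x + e - A *ᵥ u) ⬝ᵥ A *ᵥ z = 0 := hLS.2 z hz
  rw [mulVec_sub, sub_dotProduct]
  rw [sub_dotProduct, add_dotProduct] at h
  linarith

lemma le_div_sqrt_mul_add_div_of_le_mul_sqrt_add {a r E δ : ℝ} (hr : 0 ≤ r) (hE : 0 ≤ E)
    (hδ₀ : 0 ≤ δ) (hδ₁ : δ < 1) (h : a ≤ δ * √(a ^ 2 + r ^ 2) + E) :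
    a ≤ δ / √(1 - δ ^ 2) * r + E / (1 - δ) := by
  set D := √(1 - δ ^ 2)
  have hD2 : D ^ 2 = 1 - δ ^ 2 := Real.sq_sqrt (by nlinarith)
  have hD : 0 < D := Real.sqrt_pos.mpr (by nlinarith)
  have hrhs : δ / D * r + E / (1 - δ) = (E + δ * (E + D * r)) / D ^ 2 := by
    rw [div_mul_eq_mul_div, div_add_div _ _ hD.ne' (by linarith),
      div_eq_div_iff (by nlinarith) (by positivity)]
    linear_combination D * E * hD2
  rw [hrhs, le_div_iff₀ (by positivity)]
  suffices D ^ 2 * a - E ≤ δ * (E + D * r) by linarith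
  rcases le_or_gt a E with haE | haE
  · nlinarith [mul_nonneg hδ₀ (add_nonneg hE (mul_nonneg hD.le hr))]
  -- `a` lies below the larger root of the quadratic `(a - E)² = δ² (a² + r²)`
  have hsq : (a - E) ^ 2 ≤ δ ^ 2 * (a ^ 2 + r ^ 2) := by
    have := pow_le_pow_left₀ (sub_nonneg.mpr haE.le) (sub_le_iff_le_add.mpr h) 2
    rwa [mul_pow, Real.sq_sqrt (by positivity)] at this
  have : (D ^ 2 * a - E) ^ 2 ≤ (δ * (E + D * r)) ^ 2 := by
    have hcross : 0 ≤ δ ^ 2 * D * E * r := by positivity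
    linear_combination D ^ 2 * hsq + (D ^ 2 * a ^ 2 - E ^ 2) * hD2 + 2 * hcross
  exact (abs_le_of_sq_le_sq' this (by positivity)).2

lemma euclNorm_restrict_sub_le {m d L L' : ℕ} {A : Matrix (Fin m) (Fin d) ℝ} {δ δ' : ℝ}
    {x u : Fin d → ℝ} {e : Fin m → ℝ} {U : Finset (Fin d)}
    (hRIP' : RIP A L δ') (hU : U.card ≤ L) (hRIP : RIP A L' δ)
    (hUx : U.card + (supp x).card ≤ L') (hLS : LeastSq A (A *ᵥ x + e) U u) :
    euclNorm (restrict (u - x) U) ≤ δ * euclNorm (u - x) + √(1 + δ') * euclNorm e := by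
  set w := restrict (u - x) U
  have hw : supp w ⊆ U := supp_restrict_subset _ _
  have hsupp : supp (u - x) ∪ supp w ⊆ U ∪ supp x :=
    union_subset ((supp_sub_subset u x).trans (union_subset_union_left hLS.1))
      (hw.trans subset_union_left)
  have hcross := (abs_le.mp (hRIP.abs_mulVec_dotProduct_sub_le
    ((card_le_card hsupp).trans ((card_union_le _ _).trans hUx)))).1
  rw [hLS.mulVec_sub_dotProduct_eq hw, dotProduct_restrict_self] at hcross
  have hnoise : e ⬝ᵥ A *ᵥ w ≤ euclNorm e * (√(1 + δ') * euclNorm w) :=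
    (dotProduct_le_euclNorm_mul_euclNorm _ _).trans <| mul_le_mul_of_nonneg_left
      (hRIP'.euclNorm_mulVec_le ((card_le_card hw).trans hU)) (euclNorm_nonneg e)
  have hb : 0 ≤ δ * euclNorm (u - x) + √(1 + δ') * euclNorm e :=
    add_nonneg (mul_nonneg hRIP.1.le (euclNorm_nonneg _))
      (mul_nonneg (Real.sqrt_nonneg _) (euclNorm_nonneg _))
  nlinarith [euclNorm_nonneg w]

/-- estimation-step bound for the least-squares solution on `U`. -/
theorem cosamp_estimation_bound
    {m d K : ℕ} (A : Matrix (Fin m) (Fin d) ℝ) (xS : Fin d → ℝ) (e : Fin m → ℝ)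
    (δ3 δ4 : ℝ)
    (hxS : (supp xS).card ≤ K)
    (hRIP3 : RIP A (3 * K) δ3) (hRIP4 : RIP A (4 * K) δ4)
    (U : Finset (Fin d)) (hU : U.card ≤ 3 * K)
    (u : Fin d → ℝ) (hLS : LeastSq A (A.mulVec xS + e) U u) :
    euclNorm (restrict (u - xS) U) ≤
      δ4 / Real.sqrt (1 - δ4 ^ 2) * euclNorm (restrict xS Uᶜ) +
        Real.sqrt (1 + δ3) / (1 - δ4) * euclNorm e := by
  have hest := euclNorm_restrict_sub_le hRIP3 hU hRIP4 (by omega) hLS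
  have hsplit : euclNorm (u - xS) =
      √(euclNorm (restrict (u - xS) U) ^ 2 + euclNorm (restrict xS Uᶜ) ^ 2) := by
    rw [← euclNorm_neg (restrict xS Uᶜ), ← restrict_compl_sub_of_supp_subset hLS.1,
      ← euclNorm_sq_eq_restrict_add_restrict_compl, Real.sqrt_sq (euclNorm_nonneg _)]
  rw [hsplit] at hest
  calc _ ≤ δ4 / √(1 - δ4 ^ 2) * euclNorm (restrict xS Uᶜ)
          + √(1 + δ3) * euclNorm e / (1 - δ4) :=
        le_div_sqrt_mul_add_div_of_le_mul_sqrt_add (euclNorm_nonneg _)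
          (mul_nonneg (Real.sqrt_nonneg _) (euclNorm_nonneg e)) hRIP4.1.le hRIP4.2.1 hest
    _ = _ := by ring
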